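/- The hyperplane system A coincides with the set of intersections with Hom_R(RΛ_S,ℝ) of those hyperplanes of Ǎ meeting the Tits cone: A = { Ȟ ∩ Hom_R(RΛ_S,ℝ) : Ȟ ∈ Ǎ and Ȟ ∩ T° ≠ ∅ }, where Ȟ ∩ T° is computed inside Hom_ℤ(RΛ_S,ℝ) via the inclusion Hom_R(RΛ_S,ℝ) ⊆ Hom_ℤ(RΛ_S,ℝ). -/

import Mathlib

open scoped BigOperators

noncomputable section

/-- Data of a fusion ring structure on a ring `R`, with `ℤ`-basis indexed by `ι`. -/
structure FusionData (R : Type*) [Ring R] (ι : Type*) [Fintype ι] [DecidableEq ι] where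
  /-- the distinguished basis -/
  b : Module.Basis ι ℤ R
  /-- the index of the unit -/
  unit : ι
  b_unit : b unit = 1
  basis_mul_ne_zero : ∀ j k, b j * b k ≠ 0
  c_nonneg : ∀ j k i, 0 ≤ b.repr (b j * b k) i
  /-- the involution on the index set -/
  inv : ι → ι
  inv_invol : ∀ j, inv (inv j) = j
  /-- the `ℤ`-linear extension of the involution -/
  star : R →+ R
  star_basis : ∀ j, star (b j) = b (inv j)
  star_mul : ∀ x y, star (x * y) = star y * star x
  c_unit_iff : ∀ j k, b.repr (b j * b k) unit = 1 ↔ k = inv j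

namespace FusionData

variable {R : Type*} [Ring R] {ι : Type*} [Fintype ι] [DecidableEq ι]

/-- The structure constants of a fusion ring. -/
def c (F : FusionData R ι) (j k i : ι) : ℤ := F.b.repr (F.b j * F.b k) i

/-- Nonnegativity of an element of a fusion ring: all basis coefficients are nonnegative. -/
def nonneg (F : FusionData R ι) (r : R) : Prop := ∀ i, 0 ≤ F.b.repr r i

end FusionData

/-- The basis vector `α_s` of the free module `S → R`. -/
def simRoot (R : Type*) [Ring R] {S : Type*} [DecidableEq S] (s : S) : S → R :=
  Pi.single s 1

/-- A geometric realisation of the Coxeter system `(W, S)` over a fusion ring `R`,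
together with a Frobenius–Perron dimension homomorphism. -/
structure GeomSetting (R : Type*) [Ring R] (ι : Type*) [Fintype ι] [DecidableEq ι]
    (S : Type*) [Fintype S] [DecidableEq S] (W : Type*) [Group W] where
  /-- the fusion ring structure on `R` -/
  FD : FusionData R ι
  /-- the Coxeter matrix (`0` denotes `∞`) -/
  M : CoxeterMatrix S
  /-- the Coxeter system -/
  cs : CoxeterSystem M W
  /-- the Frobenius–Perron dimension -/
  FP : R →+* ℝ
  FP_basis : ∀ i, 1 ≤ FP (FD.b i)
  FP_star : ∀ r, FP (FD.star r) = FP r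
  /-- the sesquilinear form on `RΛ_S = S → R` -/
  B : (S → R) → (S → R) → R
  B_add_left : ∀ u u' v, B (u + u') v = B u v + B u' v
  B_add_right : ∀ u v v', B u (v + v') = B u v + B u v'
  B_sesq : ∀ (x y : R) (s t : S),
    B (x • simRoot R s) (y • simRoot R t)
      = y * B (simRoot R s) (simRoot R t) * FD.star x
  cartan_diag : ∀ s, B (simRoot R s) (simRoot R s) = 2
  cartan_nonneg : ∀ s t, s ≠ t →
    FD.nonneg (-(B (simRoot R s) (simRoot R t)))
  cartan_star : ∀ s t, s ≠ t →
    B (simRoot R t) (simRoot R s)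
      = FD.star (B (simRoot R s) (simRoot R t))
  cartan_fin : ∀ s t, s ≠ t → M s t ≠ 0 →
    FP (B (simRoot R s) (simRoot R t))
      = -2 * Real.cos (Real.pi / (M s t : ℝ))
  cartan_inf : ∀ s t, s ≠ t → M s t = 0 →
    FP (B (simRoot R s) (simRoot R t)) ≤ -2
  /-- the left `R`-linear action of `W` on `RΛ_S` -/
  rep : W →* ((S → R) ≃ₗ[R] (S → R))
  rep_simple : ∀ (s : S) (v : S → R),
    rep (cs.simple s) v = v - B (simRoot R s) v • simRoot R s

namespace GeomSetting

variable {R : Type*} [Ring R] {ι : Type*} [Fintype ι] [DecidableEq ι]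
  {S : Type*} [Fintype S] [DecidableEq S] {W : Type*} [Group W]

/-- The Cartan matrix `r_{s,t}` of the realisation. -/
def cartan (G : GeomSetting R ι S W) (s t : S) : R :=
  G.B (simRoot R s) (simRoot R t)

/-- The unfolded (integral) Cartan matrix `ř`. -/
def rcheck (G : GeomSetting R ι S W) (p q : ι × S) : ℤ :=
  if p.2 = q.2 then (if p.1 = q.1 then 2 else 0)
  else G.FD.b.repr (G.FD.b q.1 * G.cartan p.2 q.2) p.1

/-- The unfolded Coxeter matrix `m̌` (`0` denotes `∞`). -/
def mcheck (G : GeomSetting R ι S W) (p q : ι × S) : ℕ :=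
  if p = q then 1
  else if G.rcheck p q = 0 then 2
  else if G.rcheck p q = -1 then 3
  else 0

/-- The Coxeter relations of the unfolded Coxeter system. -/
def rels (G : GeomSetting R ι S W) : Set (FreeGroup (ι × S)) :=
  Set.range fun pq : (ι × S) × (ι × S) =>
    (FreeGroup.of pq.1 * FreeGroup.of pq.2) ^ G.mcheck pq.1 pq.2

/-- The unfolded Coxeter group `W̌`. -/
def Wcheck (G : GeomSetting R ι S W) : Type _ := PresentedGroup G.rels

instance (G : GeomSetting R ι S W) : Group G.Wcheck :=
  QuotientGroup.Quotient.group _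

/-- The generators `(b, s)` of the unfolded Coxeter group. -/
def gen (G : GeomSetting R ι S W) (p : ι × S) : G.Wcheck := PresentedGroup.of p

end GeomSetting


section Hyperplanes

variable {X : Type*} {G : Type*} [Group G]

/-- The closed fundamental cone in coordinates. -/
def coneC (X : Type*) : Set (X → ℝ) := {Z | ∀ x, 0 ≤ Z x}

/-- The open fundamental cone in coordinates. -/
def coneCo (X : Type*) : Set (X → ℝ) := {Z | ∀ x, 0 < Z x}

/-- The coordinate hyperplane (wall) at `x`. -/
def wallH (X : Type*) (x : X) : Set (X → ℝ) := {Z | Z x = 0}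

/-- The Tits cone of an action given in coordinates on the dual space. -/
def titsT (rho : G →* ((X → ℝ) ≃ₗ[ℝ] (X → ℝ))) : Set (X → ℝ) :=
  ⋃ g : G, rho g '' coneC X

/-- The hyperplane system of an action. -/
def hypSys (rho : G →* ((X → ℝ) ≃ₗ[ℝ] (X → ℝ))) : Set (Set (X → ℝ)) :=
  {H | ∃ (g : G) (x : X), H = rho g '' wallH X x}

/-- The complexified hyperplane complement. -/
def omegaReg (rho : G →* ((X → ℝ) ≃ₗ[ℝ] (X → ℝ))) : Set ((X → ℝ) × (X → ℝ)) :=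
  (interior (titsT rho) ×ˢ interior (titsT rho)) \ ⋃ H ∈ hypSys rho, H ×ˢ H

end Hyperplanes

/-- The embedding `Hom_R(RΛ_S, ℝ) → Hom_ℤ(RΛ_S, ℝ)` in coordinates:
`Z(α_s) ↦ (Z(b_i · α_s))_{(i,s)} = (FPdim(b_i) · Z(α_s))_{(i,s)}`. -/
def GeomSetting.emb {R : Type*} [Ring R] {ι : Type*} [Fintype ι] [DecidableEq ι]
    {S : Type*} [Fintype S] [DecidableEq S] {W : Type*} [Group W]
    (G : GeomSetting R ι S W) (Z : S → ℝ) : (ι × S) → ℝ :=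
  fun p => G.FP (G.FD.b p.1) * Z p.2

variable {R : Type*} [Ring R] {ι : Type*} [Fintype ι] [DecidableEq ι]
  {S : Type*} [Fintype S] [DecidableEq S] {W : Type*} [Group W]

/-!
Given its action through `ř`, the relations of `W̌` force `ř` to be symmetric where `m̌ ∈ {2, 3}`,
so `W̌` is a Coxeter group with a geometric action on `Hom_ℤ(RΛ_S, ℝ)`, and by Tits' lemma every
root of `W̌` has a constant sign on the chamber `Č`.

Lifting `s ∈ S` to the product of the pairwise commuting generators `(b, s)`, `b ∈ 𝔅`, intertwines
the two actions with the embedding `Hom_R(RΛ_S, ℝ) → Hom_ℤ(RΛ_S, ℝ)`. Hence `w · H_{α_s}` is the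
trace of the lift of the wall of `(1, s)`, and this lift contains the image of `w` applied to a
point of `H_{α_s} ∩ T°`.

Conversely, the root of a hyperplane `Ȟ ∈ Ǎ` meeting `T°` restricts to a nonzero form on
`Hom_R(RΛ_S, ℝ)` vanishing at a point of `T°`, so it takes both signs on chambers `w₁ C`, `w₂ C`.
Along a gallery from `w₁` to `w₂`, lifted to `W̌` one generator at a time, the sign of this root
flips at a single generator `(b, t)`. So `Ȟ` is the lift of the wall of `(b, t)`, whose trace is a
hyperplane `w · H_{α_t}` of `A`.
-/

open Set Filter Topology

theorem List.exists_eq_append_cons_of_not {α : Type*} (P : List α → Prop) {l : List α}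
    (h0 : P []) (hl : ¬P l) : ∃ l₁ r l₂, l = l₁ ++ r :: l₂ ∧ P l₁ ∧ ¬P (l₁ ++ [r]) := by
  induction l using List.reverseRecOn with
  | nil => exact absurd h0 hl
  | append_singleton l r ih =>
    by_cases hP : P l
    · exact ⟨l, r, [], rfl, hP, hl⟩
    · obtain ⟨l₁, r', l₂, rfl, h₁, h₂⟩ := ih hP
      exact ⟨l₁, r', l₂ ++ [r], by simp, h₁, h₂⟩

theorem Set.preimage_image_eq_image_preimage_of_semiconj {α β : Type*} {f : α → β}
    {e₁ : α ≃ α} {e₂ : β ≃ β} (h : Function.Semiconj f e₁ e₂) (s : Set β) :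
    f ⁻¹' (e₂ '' s) = e₁ '' (f ⁻¹' s) := by
  rw [e₂.image_eq_preimage_symm, e₁.image_eq_preimage_symm, ← preimage_comp, ← preimage_comp,
    (h.inverses_right e₁.rightInverse_symm e₂.leftInverse_symm).comp_eq]

section CoordinateSpace

variable {X : Type*}

theorem image_wallH_eq_of_forall_apply_eq (e : (X → ℝ) ≃ₗ[ℝ] (X → ℝ)) {p : X}
    (he : ∀ Z, e Z p = Z p) : e '' wallH X p = wallH X p := by
  ext Z
  have := he (e.symm Z)
  rw [LinearEquiv.apply_symm_apply] at this
  rw [LinearEquiv.image_eq_preimage_symm]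
  simp only [wallH, mem_preimage, mem_ofPred_eq, ← this]

theorem single_mem_coneC [DecidableEq X] (r : X) : Pi.single r 1 ∈ coneC X :=
  (Pi.single_nonneg.2 zero_le_one : (0 : X → ℝ) ≤ Pi.single r 1)

variable [Fintype X] [DecidableEq X]

theorem LinearMap.apply_eq_sum_mul_single (f : (X → ℝ) →ₗ[ℝ] ℝ) (Z : X → ℝ) :
    f Z = ∑ r, Z r * f (Pi.single r 1) := by
  rw [f.pi_apply_eq_sum_univ Z]
  congr! 3 with r
  ext j
  simp [Pi.single_apply, eq_comm]

theorem LinearEquiv.apply_eq_sum_mul_single (e : (X → ℝ) ≃ₗ[ℝ] (X → ℝ)) (Z : X → ℝ) (x : X) :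
    e Z x = ∑ r, Z r * e (Pi.single r 1) x :=
  (LinearMap.proj x ∘ₗ e.toLinearMap).apply_eq_sum_mul_single Z

theorem LinearEquiv.exists_apply_single_ne_zero (e : (X → ℝ) ≃ₗ[ℝ] (X → ℝ)) (x : X) :
    ∃ r, e (Pi.single r 1) x ≠ 0 := by
  by_contra! h
  have := e.apply_eq_sum_mul_single (e.symm (Pi.single x 1)) x
  simp [h] at this

theorem LinearEquiv.apply_ne_zero_of_mapsTo_coneC (e : (X → ℝ) ≃ₗ[ℝ] (X → ℝ)) {x : X}
    (he : MapsTo e (coneC X) {Z | 0 ≤ Z x} ∨ MapsTo e (coneC X) {Z | Z x ≤ 0})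
    {Y : X → ℝ} (hY : Y ∈ coneCo X) : e Y x ≠ 0 := by
  intro h0
  obtain ⟨r, hr⟩ := e.exists_apply_single_ne_zero x
  rw [e.apply_eq_sum_mul_single] at h0
  have hterm : Y r * e (Pi.single r 1) x = 0 := by
    rcases he with he | he
    · exact (Finset.sum_eq_zero_iff_of_nonneg fun i _ =>
        mul_nonneg (hY i).le (he (single_mem_coneC i))).1 h0 r (Finset.mem_univ r)
    · exact (Finset.sum_eq_zero_iff_of_nonpos fun i _ =>
        mul_nonpos_of_nonneg_of_nonpos (hY i).le (he (single_mem_coneC i))).1 h0 r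
          (Finset.mem_univ r)
  exact hr ((mul_eq_zero.1 hterm).resolve_left (hY r).ne')

end CoordinateSpace

/-- In the coordinates `Z q = Z(α_q)`, `rho` is the contragredient of the geometric
representation with Cartan matrix `A`, in which `gen p` is `v ↦ v - B(α_p, v) α_p`. -/
def IsCartanAction {Γ X : Type*} [Group Γ] (rho : Γ →* ((X → ℝ) ≃ₗ[ℝ] (X → ℝ)))
    (gen : X → Γ) (A : X → X → ℝ) : Prop :=
  ∀ p Z q, rho (gen p) Z q = Z q - A p q * Z p

namespace IsCartanAction

variable {Γ X : Type*} [Group Γ] {rho : Γ →* ((X → ℝ) ≃ₗ[ℝ] (X → ℝ))} {gen : X → Γ}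
  {A : X → X → ℝ}

theorem apply_gen (h : IsCartanAction rho gen A) (p : X) (Z : X → ℝ) (q : X) :
    rho (gen p) Z q = Z q - A p q * Z p :=
  h p Z q

theorem apply_gen_mul (h : IsCartanAction rho gen A) (q : X) (v : Γ) (Z : X → ℝ) (p : X) :
    rho (gen q * v) Z p = rho v Z p - A q p * rho v Z q := by
  rw [map_mul, LinearEquiv.mul_apply, h]

theorem apply_gen_self (h : IsCartanAction rho gen A) {p : X} (hp : A p p = 2) (Z : X → ℝ) :
    rho (gen p) Z p = -Z p := by
  rw [h, hp]
  ring

theorem apply_single_of_ne [DecidableEq X] (h : IsCartanAction rho gen A) {p r : X}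
    (hrp : r ≠ p) : rho (gen p) (Pi.single r 1) = Pi.single r 1 := by
  ext q
  rw [h, Pi.single_eq_of_ne hrp.symm, mul_zero, sub_zero]

theorem list_prod_apply_of_forall (h : IsCartanAction rho gen A) {p : X} {L : List X}
    (hL : ∀ r ∈ L, A r p = 0) (Z : X → ℝ) : rho (L.map gen).prod Z p = Z p := by
  induction L with
  | nil => simp
  | cons r L ih =>
    rw [List.map_cons, List.prod_cons, h.apply_gen_mul, hL r List.mem_cons_self,
      ih fun r' hr' => hL r' (List.mem_cons_of_mem r hr'), zero_mul, sub_zero]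

theorem list_prod_apply (h : IsCartanAction rho gen A) {L : List X}
    (hL : L.Pairwise fun r r' => A r' r = 0) (Z : X → ℝ) (q : X) :
    rho (L.map gen).prod Z q = Z q - (L.map fun r => A r q * Z r).sum := by
  induction L generalizing q with
  | nil => simp
  | cons r L ih =>
    obtain ⟨hr, hL⟩ := List.pairwise_cons.1 hL
    rw [List.map_cons, List.prod_cons, h.apply_gen_mul, ih hL, ih hL, List.map_cons,
      List.sum_cons, List.sum_eq_zero (l := L.map fun r' => A r' r * Z r') fun a ha => ?_]
    · ring
    · obtain ⟨r', hr', rfl⟩ := List.mem_map.1 ha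
      rw [hr r' hr', zero_mul]

/-- The root `Z ↦ (v • Z) x` vanishes on the basis vectors `Pi.single r 1`, `r ≠ p`, fixed by
`gen p`, so it is a nonzero multiple of `Z ↦ Z p`. -/
theorem image_wallH_eq_of_sign_change [Fintype X] [DecidableEq X]
    (h : IsCartanAction rho gen A) {v : Γ} {p x : X}
    (hpos : MapsTo (rho v) (coneC X) {Z | 0 ≤ Z x})
    (hneg : MapsTo (rho (v * gen p)) (coneC X) {Z | Z x ≤ 0}) :
    rho v '' wallH X p = wallH X x := by
  have hvanish : ∀ r ≠ p, rho v (Pi.single r 1) x = 0 := fun r hr => by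
    have := hneg (single_mem_coneC r)
    rw [mem_ofPred_eq, map_mul, LinearEquiv.mul_apply, h.apply_single_of_ne hr] at this
    exact le_antisymm this (hpos (single_mem_coneC r))
  have hexp : ∀ Z, rho v Z x = Z p * rho v (Pi.single p 1) x := fun Z => by
    rw [LinearEquiv.apply_eq_sum_mul_single,
      Finset.sum_eq_single p (fun r _ hr => by simp [hvanish r hr]) (by simp)]
  have hne : rho v (Pi.single p 1) x ≠ 0 := by
    obtain ⟨r, hr⟩ := (rho v).exists_apply_single_ne_zero x
    rwa [← not_ne_iff.1 (mt (hvanish r) hr)]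
  ext Y
  have := hexp ((rho v).symm Y)
  rw [LinearEquiv.apply_symm_apply] at this
  rw [LinearEquiv.image_eq_preimage_symm]
  simp only [wallH, mem_preimage, mem_ofPred_eq, this, mul_eq_zero, hne, or_false]

theorem eq_zero_of_mul_pow_two [DecidableEq X] (h : IsCartanAction rho gen A) {p q : X}
    (hpq : p ≠ q) (hp : A p p = 2) (hq : A q q = 2) (hrel : (gen p * gen q) ^ 2 = 1)
    (h0 : A p q = 0) : A q p = 0 := by
  have key := congrArg (fun g => rho g (Pi.single q 1) p) hrel
  simp only [pow_succ, pow_zero, one_mul, map_mul, LinearEquiv.mul_apply, h.apply_gen, map_one,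
    LinearEquiv.coe_one, id, Pi.single_eq_same, Pi.single_eq_of_ne hpq, hp, hq, h0] at key
  linarith

theorem eq_neg_one_of_mul_pow_three [DecidableEq X] (h : IsCartanAction rho gen A) {p q : X}
    (hpq : p ≠ q) (hp : A p p = 2) (hq : A q q = 2) (hrel : (gen p * gen q) ^ 3 = 1)
    (h1 : A p q = -1) : A q p = -1 := by
  have keyp := congrArg (fun g => rho g (Pi.single q 1) p) hrel
  have keyq := congrArg (fun g => rho g (Pi.single q 1) q) hrel
  simp only [pow_succ, pow_zero, one_mul, map_mul, LinearEquiv.mul_apply, h.apply_gen, map_one,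
    LinearEquiv.coe_one, id, Pi.single_eq_same, Pi.single_eq_of_ne hpq, hp, hq, h1] at keyp keyq
  ring_nf at keyp keyq
  have hroots : (A q p + 1) * (A q p + 2) = 0 := by linear_combination -keyq - keyp
  rcases mul_eq_zero.1 hroots with hroot | hroot
  · linarith
  · rw [show A q p = -2 by linarith] at keyp
    norm_num at keyp

end IsCartanAction

section TitsCone

variable {Γ X : Type*} [Group Γ] (rho : Γ →* ((X → ℝ) ≃ₗ[ℝ] (X → ℝ)))

theorem apply_mem_titsT {Z : X → ℝ} (hZ : Z ∈ titsT rho) (g : Γ) : rho g Z ∈ titsT rho := by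
  obtain ⟨_, ⟨h, rfl⟩, Y, hY, rfl⟩ := hZ
  exact mem_iUnion.2 ⟨g * h, Y, hY, by rw [map_mul, LinearEquiv.mul_apply]⟩

theorem apply_mem_interior_titsT [Finite X] {Z : X → ℝ} (hZ : Z ∈ interior (titsT rho))
    (g : Γ) : rho g Z ∈ interior (titsT rho) := by
  let e := (rho g).toContinuousLinearEquiv.toHomeomorph
  have : e '' interior (titsT rho) ⊆ interior (titsT rho) := by
    rw [e.image_interior]
    exact interior_mono (image_subset_iff.2 fun Y hY => apply_mem_titsT rho hY g)
  exact this (mem_image_of_mem e hZ)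

theorem exists_apply_pos_of_mem_interior_titsT [Finite X] {L : (X → ℝ) →ₗ[ℝ] ℝ} (hL : L ≠ 0)
    {Z : X → ℝ} (hZ : Z ∈ interior (titsT rho)) (hLZ : L Z = 0) :
    ∃ g, ∃ Y ∈ coneC X, 0 < L (rho g Y) := by
  have hopen := L.isOpenMap_of_finiteDimensional (L.surjective hL) _
    (isOpen_interior (s := titsT rho))
  obtain ⟨ε, hε, hball⟩ := Metric.isOpen_iff.1 hopen 0 ⟨Z, hZ, hLZ⟩
  obtain ⟨Z', hZ', hLZ'⟩ := hball (a := ε / 2) (by simp [abs_of_pos hε, hε])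
  obtain ⟨_, ⟨g, rfl⟩, Y, hY, rfl⟩ := interior_subset hZ'
  exact ⟨g, Y, hY, by rw [hLZ']; positivity⟩

variable {rho} {gen : X → Γ} {A : X → X → ℝ}

/-- Near this point, either `Z` or `gen s • Z` lies in the chamber. -/
theorem IsCartanAction.mem_interior_titsT [Finite X] [DecidableEq X]
    (h : IsCartanAction rho gen A) {s : X} (hs : A s s = 2) (hsq : gen s * gen s = 1) :
    (fun t => if t = s then 0 else 1) ∈ interior (titsT rho) := by
  rw [mem_interior_iff_mem_nhds]
  have hnear : ∀ᶠ Z in 𝓝 (fun t => if t = s then (0 : ℝ) else 1),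
      ∀ t, t ≠ s → |A s t| * |Z s| < Z t := by
    refine eventually_all.2 fun t => ?_
    by_cases hts : t = s
    · simp [hts]
    · filter_upwards [(continuous_const.mul (continuous_apply s).abs).continuousAt.eventually_lt
        (continuous_apply t).continuousAt (by simp [hts])] with Z hZ _ using hZ
  filter_upwards [hnear] with Z hZ
  by_cases hZs : 0 ≤ Z s
  · refine mem_iUnion.2 ⟨1, Z, fun t => ?_, by simp⟩
    rcases eq_or_ne t s with rfl | hts
    · exact hZs
    · exact (mul_nonneg (abs_nonneg _) (abs_nonneg _)).trans (hZ t hts).le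
  · refine mem_iUnion.2 ⟨gen s, rho (gen s) Z, fun t => ?_, ?_⟩
    · rw [h.apply_gen]
      rcases eq_or_ne t s with rfl | hts
      · rw [hs]
        linarith
      · have := hZ t hts
        rw [← abs_mul] at this
        linarith [le_abs_self (A s t * Z s)]
    · rw [← LinearEquiv.mul_apply, ← map_mul, hsq, map_one, LinearEquiv.coe_one, id]

end TitsCone

/-- `∞` is encoded as `0`, as in `CoxeterMatrix`. -/
structure CoxeterMatrix.IsCompatibleCartan {B : Type*} (M : CoxeterMatrix B)
    (A : B → B → ℝ) : Prop where
  diag : ∀ p, A p p = 2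
  eq_zero : ∀ p q, M p q = 2 → A p q = 0
  eq_neg_one : ∀ p q, M p q = 3 → A p q = -1
  le_neg_two : ∀ p q, M p q = 0 → A p q ≤ -2
  cases : ∀ p q, p ≠ q → M p q = 2 ∨ M p q = 3 ∨ M p q = 0

namespace CoxeterSystem

variable {B W' : Type*} [Group W'] {M : CoxeterMatrix B} (cs : CoxeterSystem M W')

theorem length_simple_mul_le (i : B) (w : W') :
    cs.length (cs.simple i * w) ≤ cs.length w + 1 := by
  rcases cs.length_simple_mul w i with h | h <;> omega

theorem exists_eq_simple_mul_of_isLeftDescent {w : W'} {i : B} (h : cs.IsLeftDescent w i) :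
    ∃ w', w = cs.simple i * w' ∧ cs.length w' + 1 = cs.length w ∧ ¬cs.IsLeftDescent w' i := by
  refine ⟨cs.simple i * w, (cs.simple_mul_simple_cancel_left i).symm, cs.isLeftDescent_iff.1 h,
    ?_⟩
  rw [cs.not_isLeftDescent_iff, cs.simple_mul_simple_cancel_left]
  exact (cs.isLeftDescent_iff.1 h).symm

theorem simple_mul_simple_mul_simple_of_eq_two {i j : B} (h : M i j = 2) :
    cs.simple i * cs.simple j * cs.simple i = cs.simple j := by
  have hrel := cs.simple_mul_simple_pow i j
  rw [h, pow_two, ← mul_assoc] at hrel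
  exact (eq_inv_of_mul_eq_one_left hrel).trans (cs.inv_simple j)

theorem simple_mul_simple_mul_simple_mul_simple_of_eq_three {i j : B} (h : M i j = 3) :
    cs.simple i * cs.simple j * cs.simple i * cs.simple j = cs.simple j * cs.simple i := by
  have hrel := cs.simple_mul_simple_pow i j
  rw [h, pow_succ, pow_two] at hrel
  calc _ = (cs.simple i * cs.simple j)⁻¹ :=
        eq_inv_of_mul_eq_one_left (by simpa only [mul_assoc] using hrel)
    _ = _ := by rw [mul_inv_rev, cs.inv_simple, cs.inv_simple]

theorem not_isLeftDescent_of_eq_two {i j : B} (h : M i j = 2) {w : W'}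
    (hwj : ¬cs.IsLeftDescent w j) (hjwi : ¬cs.IsLeftDescent (cs.simple j * w) i) :
    ¬cs.IsLeftDescent w i := by
  intro hwi
  obtain ⟨u, rfl, hu, -⟩ := cs.exists_eq_simple_mul_of_isLeftDescent hwi
  rw [cs.not_isLeftDescent_iff] at hwj hjwi
  rw [← mul_assoc, ← mul_assoc, cs.simple_mul_simple_mul_simple_of_eq_two h] at hjwi
  have := cs.length_simple_mul_le j u
  omega

theorem not_isLeftDescent_of_eq_three {i j : B} (h : M i j = 3) {w : W'}
    (hwi : ¬cs.IsLeftDescent w i) (hiwj : ¬cs.IsLeftDescent (cs.simple i * w) j)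
    (hjiwi : ¬cs.IsLeftDescent (cs.simple j * (cs.simple i * w)) i) :
    ¬cs.IsLeftDescent w j := by
  intro hwj
  obtain ⟨u, rfl, hu, -⟩ := cs.exists_eq_simple_mul_of_isLeftDescent hwj
  rw [cs.not_isLeftDescent_iff] at hwi hiwj hjiwi
  rw [← mul_assoc, ← mul_assoc, ← mul_assoc,
    cs.simple_mul_simple_mul_simple_mul_simple_of_eq_three h, mul_assoc] at hjiwi
  have := cs.length_simple_mul_le j (cs.simple i * u)
  have := cs.length_simple_mul_le i u
  omega

end CoxeterSystem

namespace IsCartanAction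

variable {B W' : Type*} [Group W'] {M : CoxeterMatrix B} {cs : CoxeterSystem M W'}
  {A : B → B → ℝ} {rho : W' →* ((B → ℝ) ≃ₗ[ℝ] (B → ℝ))}

/-- The infinite dihedral case of Tits' lemma. Peeling a descent `y` off `u` swaps the roles of
`x` and `y` and keeps `0 ≤ d ≤ c`, because `A y x ≤ -2`. -/
theorem mul_add_mul_nonneg_of_eq_zero (h : IsCartanAction rho cs.simple A)
    (hA : M.IsCompatibleCartan A) {Z : B → ℝ} {N : ℕ}
    (IH : ∀ u p, cs.length u < N → ¬cs.IsLeftDescent u p → 0 ≤ rho u Z p) :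
    ∀ u, cs.length u < N → ∀ x y, M x y = 0 → ¬cs.IsLeftDescent u x →
      ∀ c d : ℝ, 0 ≤ d → d ≤ c → 0 ≤ c * rho u Z x + d * rho u Z y := by
  suffices ∀ n u, cs.length u = n → n < N → ∀ x y, M x y = 0 → ¬cs.IsLeftDescent u x →
      ∀ c d : ℝ, 0 ≤ d → d ≤ c → 0 ≤ c * rho u Z x + d * rho u Z y from
    fun u => this _ u rfl
  intro n
  induction n using Nat.strong_induction_on with
  | _ n ih =>
  intro u hn hnN x y hxy hux c d hd hdc
  by_cases huy : cs.IsLeftDescent u y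
  · obtain ⟨u, rfl, hlen, huy⟩ := cs.exists_eq_simple_mul_of_isLeftDescent huy
    have hyx : M y x = 0 := by rw [M.symmetric]; exact hxy
    have := ih _ (by omega) u rfl (by omega) y x hyx huy (-c * A y x - d) c (by linarith)
      (by nlinarith [hA.le_neg_two y x hyx])
    rw [h.apply_gen_mul, h.apply_gen_mul, hA.diag]
    linarith
  · exact add_nonneg (mul_nonneg (hd.trans hdc) (IH u x (by omega) hux))
      (mul_nonneg hd (IH u y (by omega) huy))

/-- **Tits' lemma**, by induction on the length of `v`, peeling off a left descent `q` and
distinguishing the type `M p q ∈ {2, 3, ∞}` of the dihedral subgroup `⟨s_p, s_q⟩`. -/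
theorem mapsTo_coneC_of_not_isLeftDescent (h : IsCartanAction rho cs.simple A)
    (hA : M.IsCompatibleCartan A) {v : W'} {p : B} (hv : ¬cs.IsLeftDescent v p) :
    MapsTo (rho v) (coneC B) {Z | 0 ≤ Z p} := by
  intro Z hZ
  suffices ∀ n v p, cs.length v = n → ¬cs.IsLeftDescent v p → 0 ≤ rho v Z p from
    this _ v p rfl hv
  intro n
  induction n using Nat.strong_induction_on with
  | _ n ih =>
  intro v p hn hv
  have IH : ∀ u q, cs.length u < n → ¬cs.IsLeftDescent u q → 0 ≤ rho u Z q :=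
    fun u q hu => ih _ hu u q rfl
  rcases eq_or_ne v 1 with rfl | hv1
  · simpa using hZ p
  obtain ⟨q, hq⟩ := cs.exists_leftDescent_of_ne_one hv1
  have hpq : p ≠ q := by rintro rfl; exact hv hq
  obtain ⟨v, rfl, hlen, hvq⟩ := cs.exists_eq_simple_mul_of_isLeftDescent hq
  have hqp {m : ℕ} (hm : M p q = m) : M q p = m := by rw [M.symmetric]; exact hm
  rw [h.apply_gen_mul]
  rcases hA.cases p q hpq with hm | hm | hm
  · rw [hA.eq_zero q p (hqp hm), zero_mul, sub_zero]
    exact IH v p (by omega) (cs.not_isLeftDescent_of_eq_two hm hvq hv)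
  · rw [hA.eq_neg_one q p (hqp hm)]
    by_cases hvp : cs.IsLeftDescent v p
    · obtain ⟨u, rfl, hlen', hup⟩ := cs.exists_eq_simple_mul_of_isLeftDescent hvp
      have huq := cs.not_isLeftDescent_of_eq_three hm hup hvq hv
      rw [h.apply_gen_mul, h.apply_gen_mul, hA.diag, hA.eq_neg_one p q hm]
      linarith [IH u q (by omega) huq]
    · linarith [IH v p (by omega) hvp, IH v q (by omega) hvq]
  · have := h.mul_add_mul_nonneg_of_eq_zero hA IH v (by omega) q p (hqp hm) hvq (-A q p) 1
      zero_le_one (by linarith [hA.le_neg_two q p (hqp hm)])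
    linarith

theorem mapsTo_coneC_nonneg_or_nonpos (h : IsCartanAction rho cs.simple A)
    (hA : M.IsCompatibleCartan A) (v : W') (p : B) :
    MapsTo (rho v) (coneC B) {Z | 0 ≤ Z p} ∨ MapsTo (rho v) (coneC B) {Z | Z p ≤ 0} := by
  by_cases hv : cs.IsLeftDescent v p
  · obtain ⟨v, rfl, -, hv⟩ := cs.exists_eq_simple_mul_of_isLeftDescent hv
    refine Or.inr fun Z hZ => ?_
    rw [mem_ofPred_eq, map_mul, LinearEquiv.mul_apply, h.apply_gen_self (hA.diag p),
      neg_nonpos]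
    exact h.mapsTo_coneC_of_not_isLeftDescent hA hv hZ
  · exact Or.inl (h.mapsTo_coneC_of_not_isLeftDescent hA hv)

end IsCartanAction

/-- The letters `(b, s)`, `b ∈ 𝔅`, of the word lifting the simple reflection `s` to `W̌`. -/
def blockWord (κ : Type*) [Fintype κ] {T : Type*} (s : T) : List (κ × T) :=
  Finset.univ.toList.map fun j => (j, s)

theorem blockWord_nodup {κ : Type*} [Fintype κ] {T : Type*} (s : T) :
    (blockWord κ s).Nodup :=
  (Finset.nodup_toList _).map fun _ _ h => congrArg Prod.fst h

theorem FusionData.repr_basis_mul_nonneg (F : FusionData R ι) {x : R} (hx : F.nonneg x)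
    (j i : ι) : 0 ≤ F.b.repr (F.b j * x) i := by
  conv_rhs => rw [← F.b.sum_repr x, Finset.mul_sum]
  simp only [mul_smul_comm, map_sum, map_zsmul, Finsupp.coe_finsetSum, Finset.sum_apply,
    Finsupp.smul_apply, smul_eq_mul]
  exact Finset.sum_nonneg fun k _ => mul_nonneg (hx k) (F.c_nonneg j k i)

namespace GeomSetting

section Unfolding

variable (G : GeomSetting R ι S W)

theorem FP_basis_pos (i : ι) : 0 < G.FP (G.FD.b i) :=
  one_pos.trans_le (G.FP_basis i)

theorem FP_eq_sum_repr (x : R) : G.FP x = ∑ i, (G.FD.b.repr x i : ℝ) * G.FP (G.FD.b i) := by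
  conv_lhs => rw [← G.FD.b.sum_repr x]
  simp [map_sum]

theorem FP_cartan_self (s : S) : G.FP (G.cartan s s) = 2 := by
  rw [cartan, G.cartan_diag, map_ofNat]

@[simp]
theorem rcheck_self (p : ι × S) : G.rcheck p p = 2 := by
  simp [rcheck]

theorem rcheck_of_fst_ne {i j : ι} (s : S) (h : i ≠ j) : G.rcheck (i, s) (j, s) = 0 := by
  simp [rcheck, h]

theorem rcheck_of_snd_ne (j i : ι) {s t : S} (h : s ≠ t) :
    G.rcheck (j, s) (i, t) = G.FD.b.repr (G.FD.b i * G.cartan s t) j := by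
  simp [rcheck, h]

theorem rcheck_nonpos {p q : ι × S} (hpq : p ≠ q) : G.rcheck p q ≤ 0 := by
  obtain ⟨i, s⟩ := p
  obtain ⟨j, t⟩ := q
  rcases eq_or_ne s t with rfl | hst
  · rw [G.rcheck_of_fst_ne s fun h => hpq (by rw [h])]
  · rw [G.rcheck_of_snd_ne i j hst, ← neg_neg (G.cartan s t), mul_neg, map_neg,
      Finsupp.neg_apply, neg_nonpos]
    exact G.FD.repr_basis_mul_nonneg (G.cartan_nonneg s t hst) j i

theorem gen_mul_gen_pow_mcheck (p q : ι × S) : (G.gen p * G.gen q) ^ G.mcheck p q = 1 :=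
  PresentedGroup.one_of_mem ⟨(p, q), rfl⟩

def unfoldedCoxeterMatrix (hsymm : ∀ p q, G.mcheck p q = G.mcheck q p) :
    CoxeterMatrix (ι × S) where
  M := G.mcheck
  isSymm := Matrix.ext fun p q => hsymm q p
  diagonal p := by simp [mcheck]
  off_diagonal p q hpq := by
    simp only [mcheck, hpq, if_false]
    split_ifs <;> norm_num

def unfoldedCoxeterSystem (hsymm : ∀ p q, G.mcheck p q = G.mcheck q p) :
    CoxeterSystem (G.unfoldedCoxeterMatrix hsymm) G.Wcheck :=
  ⟨MulEquiv.refl _⟩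

theorem unfoldedCoxeterMatrix_isCompatibleCartan (hsymm : ∀ p q, G.mcheck p q = G.mcheck q p) :
    (G.unfoldedCoxeterMatrix hsymm).IsCompatibleCartan fun p q => (G.rcheck p q : ℝ) where
  diag p := by simp
  eq_zero p q h := by
    change G.mcheck p q = 2 at h
    unfold mcheck at h
    split_ifs at h <;> simp_all
  eq_neg_one p q h := by
    change G.mcheck p q = 3 at h
    unfold mcheck at h
    split_ifs at h <;> simp_all
  le_neg_two p q h := by
    change G.mcheck p q = 0 at h
    unfold mcheck at h
    split_ifs at h with hpq
    have := G.rcheck_nonpos hpq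
    have : G.rcheck p q ≤ -2 := by omega
    exact_mod_cast this
  cases p q hpq := by
    change G.mcheck p q = 2 ∨ G.mcheck p q = 3 ∨ G.mcheck p q = 0
    simp only [mcheck, hpq, if_false]
    split_ifs <;> simp

def embLinear : (S → ℝ) →ₗ[ℝ] ((ι × S) → ℝ) :=
  LinearMap.pi fun p => G.FP (G.FD.b p.1) • LinearMap.proj p.2

theorem emb_mem_coneC {Z : S → ℝ} (hZ : Z ∈ coneC S) : G.emb Z ∈ coneC _ :=
  fun p => mul_nonneg (G.FP_basis_pos p.1).le (hZ p.2)

theorem emb_mem_coneCo {Z : S → ℝ} (hZ : Z ∈ coneCo S) : G.emb Z ∈ coneCo _ :=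
  fun p => mul_pos (G.FP_basis_pos p.1) (hZ p.2)

theorem emb_preimage_wallH (c : ι) (t : S) : G.emb ⁻¹' wallH _ (c, t) = wallH S t := by
  ext Z
  simp [wallH, GeomSetting.emb, (G.FP_basis_pos c).ne']

def liftWord (ω : List S) : G.Wcheck := ((ω.flatMap (blockWord ι)).map G.gen).prod

theorem liftWord_append_singleton (ω : List S) (s : S) :
    G.liftWord (ω ++ [s]) = G.liftWord ω * ((blockWord ι s).map G.gen).prod := by
  simp [liftWord]

theorem liftWord_cons (s : S) (ω : List S) :
    G.liftWord (s :: ω) = ((blockWord ι s).map G.gen).prod * G.liftWord ω := by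
  simp [liftWord]

end Unfolding

variable {G : GeomSetting R ι S W} {rhoE : W →* ((S → ℝ) ≃ₗ[ℝ] (S → ℝ))}
  {rhoF : G.Wcheck →* (((ι × S) → ℝ) ≃ₗ[ℝ] ((ι × S) → ℝ))}

/-- The relations of `W̌` force `ř` to be symmetric wherever `m̌` is `2` or `3`. -/
theorem mcheck_comm (hrhoF : IsCartanAction rhoF G.gen fun p q => (G.rcheck p q : ℝ))
    (p q : ι × S) : G.mcheck p q = G.mcheck q p := by
  have hdiag : ∀ r, (G.rcheck r r : ℝ) = 2 := fun r => by simp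
  have hsymm : ∀ {p q}, p ≠ q →
      (G.rcheck p q = 0 → G.rcheck q p = 0) ∧ (G.rcheck p q = -1 → G.rcheck q p = -1) := by
    intro p q hpq
    have hrel := G.gen_mul_gen_pow_mcheck p q
    constructor
    · intro h0
      simp only [mcheck, hpq, h0, if_false, if_true] at hrel
      exact_mod_cast hrhoF.eq_zero_of_mul_pow_two hpq (hdiag p) (hdiag q) hrel (by simp [h0])
    · intro h1
      simp only [mcheck, hpq, h1, if_false, if_true] at hrel
      exact_mod_cast
        hrhoF.eq_neg_one_of_mul_pow_three hpq (hdiag p) (hdiag q) hrel (by simp [h1])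
  rcases eq_or_ne p q with rfl | hpq
  · rfl
  have h0 : G.rcheck p q = 0 ↔ G.rcheck q p = 0 := ⟨(hsymm hpq).1, (hsymm hpq.symm).1⟩
  have h1 : G.rcheck p q = -1 ↔ G.rcheck q p = -1 := ⟨(hsymm hpq).2, (hsymm hpq.symm).2⟩
  simp only [mcheck, hpq, hpq.symm, if_false, h0, h1]

theorem mapsTo_coneC_nonneg_or_nonpos
    (hrhoF : IsCartanAction rhoF G.gen fun p q => (G.rcheck p q : ℝ)) (v : G.Wcheck)
    (x : ι × S) :
    MapsTo (rhoF v) (coneC _) {Z | 0 ≤ Z x} ∨ MapsTo (rhoF v) (coneC _) {Z | Z x ≤ 0} :=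
  IsCartanAction.mapsTo_coneC_nonneg_or_nonpos (cs := G.unfoldedCoxeterSystem (mcheck_comm hrhoF))
    hrhoF (G.unfoldedCoxeterMatrix_isCompatibleCartan _) v x

theorem blockWord_prod_apply_emb
    (hrhoF : IsCartanAction rhoF G.gen fun p q => (G.rcheck p q : ℝ)) (s : S) (Z : S → ℝ) :
    rhoF ((blockWord ι s).map G.gen).prod (G.emb Z)
      = G.emb fun t => Z t - G.FP (G.cartan s t) * Z s := by
  have hpw : (blockWord ι s).Pairwise fun r r' => (G.rcheck r' r : ℝ) = 0 := by
    refine (blockWord_nodup s).imp_of_mem fun {r r'} hr hr' hne => ?_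
    obtain ⟨j, -, rfl⟩ := List.mem_map.1 hr
    obtain ⟨j', -, rfl⟩ := List.mem_map.1 hr'
    rw [G.rcheck_of_fst_ne s fun h => hne (by rw [h]), Int.cast_zero]
  ext ⟨i, t⟩
  rw [hrhoF.list_prod_apply hpw, blockWord, List.map_map, Finset.sum_map_toList]
  simp only [Function.comp_apply, GeomSetting.emb]
  rcases eq_or_ne s t with rfl | hst
  · rw [Finset.sum_eq_single i (fun j _ hji => by rw [G.rcheck_of_fst_ne s hji]; simp)
      (by simp), G.rcheck_self, G.FP_cartan_self]
    push_cast
    ring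
  · simp_rw [G.rcheck_of_snd_ne _ i hst, ← mul_assoc]
    rw [← Finset.sum_mul, ← FP_eq_sum_repr, map_mul]
    ring

theorem liftWord_apply_emb (hrhoE : IsCartanAction rhoE G.cs.simple fun s t => G.FP (G.cartan s t))
    (hrhoF : IsCartanAction rhoF G.gen fun p q => (G.rcheck p q : ℝ)) (ω : List S) (Z : S → ℝ) :
    rhoF (G.liftWord ω) (G.emb Z) = G.emb (rhoE (G.cs.wordProd ω) Z) := by
  induction ω generalizing Z with
  | nil => simp [liftWord]
  | cons s ω ih =>
    rw [liftWord_cons, G.cs.wordProd_cons, map_mul, map_mul, LinearEquiv.mul_apply,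
      LinearEquiv.mul_apply, ih, blockWord_prod_apply_emb hrhoF]
    congr 1
    ext t
    rw [hrhoE.apply_gen]

theorem emb_preimage_image_liftWord
    (hrhoE : IsCartanAction rhoE G.cs.simple fun s t => G.FP (G.cartan s t))
    (hrhoF : IsCartanAction rhoF G.gen fun p q => (G.rcheck p q : ℝ)) (ω : List S)
    (A : Set ((ι × S) → ℝ)) :
    G.emb ⁻¹' (rhoF (G.liftWord ω) '' A) = rhoE (G.cs.wordProd ω) '' (G.emb ⁻¹' A) :=
  preimage_image_eq_image_preimage_of_semiconj (e₁ := (rhoE _).toEquiv) (e₂ := (rhoF _).toEquiv)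
    (fun Z => (liftWord_apply_emb hrhoE hrhoF ω Z).symm) A

theorem exists_emb_preimage_eq_of_mem_hypSys
    (hrhoE : IsCartanAction rhoE G.cs.simple fun s t => G.FP (G.cartan s t))
    (hrhoF : IsCartanAction rhoF G.gen fun p q => (G.rcheck p q : ℝ)) {H : Set (S → ℝ)}
    (hH : H ∈ hypSys rhoE) :
    ∃ Hc ∈ hypSys rhoF, (Hc ∩ G.emb '' interior (titsT rhoE)).Nonempty ∧ H = G.emb ⁻¹' Hc := by
  obtain ⟨w, s, rfl⟩ := hH
  obtain ⟨ω, rfl⟩ := G.cs.wordProd_surjective w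
  have hZ₀ := hrhoE.mem_interior_titsT (G.FP_cartan_self s) (G.cs.simple_mul_simple_self s)
  refine ⟨rhoF (G.liftWord ω) '' wallH _ (G.FD.unit, s), ⟨_, _, rfl⟩,
    ⟨_, ⟨_, ?_, liftWord_apply_emb hrhoE hrhoF ω _⟩,
      mem_image_of_mem _ (apply_mem_interior_titsT rhoE hZ₀ _)⟩, ?_⟩
  · simp [wallH, GeomSetting.emb]
  · rw [emb_preimage_image_liftWord hrhoE hrhoF, emb_preimage_wallH]

/-- Walking through the block of `t` one generator at a time, the root of `g` changes sign at a
single generator `(c, t)`, whose wall is then the wall of `g`; the generators of the block before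
it fix that wall. -/
theorem exists_image_wallH_eq_of_sign_change_block
    (hrhoF : IsCartanAction rhoF G.gen fun p q => (G.rcheck p q : ℝ)) {g u : G.Wcheck}
    {x : ι × S} {t : S} (hpos : MapsTo (rhoF (g⁻¹ * u)) (coneC _) {Z | 0 ≤ Z x})
    (hneg : ¬MapsTo (rhoF (g⁻¹ * (u * ((blockWord ι t).map G.gen).prod))) (coneC _)
      {Z | 0 ≤ Z x}) :
    ∃ c, rhoF g '' wallH _ x = rhoF u '' wallH _ (c, t) := by
  obtain ⟨l₁, r, l₂, hl, hl₁, hr⟩ := List.exists_eq_append_cons_of_not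
    (fun l => MapsTo (rhoF (g⁻¹ * (u * (l.map G.gen).prod))) (coneC _) {Z | 0 ≤ Z x})
    (by simpa using hpos) hneg
  obtain ⟨c, -, rfl⟩ := List.mem_map.1
    (hl ▸ List.mem_append_right l₁ List.mem_cons_self : r ∈ blockWord ι t)
  have hfix : ∀ r ∈ l₁, (G.rcheck r (c, t) : ℝ) = 0 := by
    intro r hr
    have hrc : r ≠ (c, t) := by
      have := blockWord_nodup (κ := ι) t
      rw [hl, List.nodup_append] at this
      exact this.2.2 r hr (c, t) List.mem_cons_self
    obtain ⟨c', -, rfl⟩ := List.mem_map.1 (hl ▸ List.mem_append_left _ hr : r ∈ blockWord ι t)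
    rw [G.rcheck_of_fst_ne t fun h => hrc (by rw [h]), Int.cast_zero]
  have hnonpos := (mapsTo_coneC_nonneg_or_nonpos hrhoF
    (g⁻¹ * (u * (l₁.map G.gen).prod) * G.gen (c, t)) x).resolve_left (by
      simpa only [List.map_append, List.map_cons, List.map_nil, List.prod_append,
        List.prod_cons, List.prod_nil, mul_one, mul_assoc] using hr)
  refine ⟨c, ?_⟩
  rw [← hrhoF.image_wallH_eq_of_sign_change hl₁ hnonpos, image_image]
  conv_rhs => rw [← image_wallH_eq_of_forall_apply_eq _ (hrhoF.list_prod_apply_of_forall hfix),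
    image_image]
  simp only [← LinearEquiv.mul_apply, ← map_mul, mul_inv_cancel_left]

theorem exists_image_wallH_eq_of_sign_change
    (hrhoF : IsCartanAction rhoF G.gen fun p q => (G.rcheck p q : ℝ)) {g : G.Wcheck}
    {x : ι × S} {ω ρ : List S}
    (hpos : MapsTo (rhoF (g⁻¹ * G.liftWord ω)) (coneC _) {Z | 0 ≤ Z x})
    (hneg : ¬MapsTo (rhoF (g⁻¹ * G.liftWord (ω ++ ρ))) (coneC _) {Z | 0 ≤ Z x}) :
    ∃ ω' c t, rhoF g '' wallH _ x = rhoF (G.liftWord ω') '' wallH _ (c, t) := by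
  obtain ⟨l₁, t, l₂, -, hl₁, ht⟩ := List.exists_eq_append_cons_of_not
    (fun l => MapsTo (rhoF (g⁻¹ * G.liftWord (ω ++ l))) (coneC _) {Z | 0 ≤ Z x})
    (by simpa using hpos) hneg
  rw [← List.append_assoc, liftWord_append_singleton] at ht
  obtain ⟨c, hc⟩ := exists_image_wallH_eq_of_sign_change_block hrhoF hl₁ ht
  exact ⟨ω ++ l₁, c, t, hc⟩

/-- The root `L` of `rhoF g '' wallH x`, read on `Hom_R(RΛ_S, ℝ)`, vanishes at a point of `T°`
and is nonzero on the open chamber, so it takes both signs on chambers of `T`. -/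
theorem exists_liftWord_sign_change
    (hrhoE : IsCartanAction rhoE G.cs.simple fun s t => G.FP (G.cartan s t))
    (hrhoF : IsCartanAction rhoF G.gen fun p q => (G.rcheck p q : ℝ)) {g : G.Wcheck}
    {x : ι × S} (hmeet : (rhoF g '' wallH _ x ∩ G.emb '' interior (titsT rhoE)).Nonempty) :
    ∃ ω ρ, MapsTo (rhoF (g⁻¹ * G.liftWord ω)) (coneC _) {Z | 0 ≤ Z x} ∧
      ¬MapsTo (rhoF (g⁻¹ * G.liftWord (ω ++ ρ))) (coneC _) {Z | 0 ≤ Z x} := by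
  obtain ⟨_, hZx, Z, hZ, rfl⟩ := hmeet
  let L : (S → ℝ) →ₗ[ℝ] ℝ := LinearMap.proj x ∘ₗ (rhoF g⁻¹).toLinearMap ∘ₗ G.embLinear
  have hLZ : L Z = 0 := by
    rwa [LinearEquiv.image_eq_preimage_symm, ← LinearEquiv.coe_inv, ← map_inv] at hZx
  have hL0 : L ≠ 0 := fun h0 => (rhoF g⁻¹).apply_ne_zero_of_mapsTo_coneC
    (mapsTo_coneC_nonneg_or_nonpos hrhoF _ x) (G.emb_mem_coneCo (Z := fun _ => 1) fun _ => one_pos)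
    (LinearMap.congr_fun h0 (fun _ => 1))
  have hchamber : ∀ ω Y, L (rhoE (G.cs.wordProd ω) Y) = rhoF (g⁻¹ * G.liftWord ω) (G.emb Y) x :=
    fun ω Y => by
      rw [map_mul, LinearEquiv.mul_apply, liftWord_apply_emb hrhoE hrhoF]
      rfl
  obtain ⟨w, Y, hY, hLY⟩ := exists_apply_pos_of_mem_interior_titsT rhoE hL0 hZ hLZ
  obtain ⟨w', Y', hY', hLY'⟩ :=
    exists_apply_pos_of_mem_interior_titsT rhoE (neg_ne_zero.2 hL0) hZ (by simp [hLZ])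
  obtain ⟨ω, rfl⟩ := G.cs.wordProd_surjective w
  obtain ⟨ρ, hρ⟩ := G.cs.wordProd_surjective ((G.cs.wordProd ω)⁻¹ * w')
  refine ⟨ω, ρ, (mapsTo_coneC_nonneg_or_nonpos hrhoF _ x).resolve_right fun hnonpos => ?_,
    fun hnonneg => ?_⟩
  · have := hnonpos (G.emb_mem_coneC hY)
    rw [mem_ofPred_eq, ← hchamber] at this
    linarith
  · have := hnonneg (G.emb_mem_coneC hY')
    rw [mem_ofPred_eq, ← hchamber, G.cs.wordProd_append, hρ, mul_inv_cancel_left] at this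
    rw [LinearMap.neg_apply] at hLY'
    linarith

theorem emb_preimage_mem_hypSys
    (hrhoE : IsCartanAction rhoE G.cs.simple fun s t => G.FP (G.cartan s t))
    (hrhoF : IsCartanAction rhoF G.gen fun p q => (G.rcheck p q : ℝ)) {g : G.Wcheck}
    {x : ι × S} (hmeet : (rhoF g '' wallH _ x ∩ G.emb '' interior (titsT rhoE)).Nonempty) :
    G.emb ⁻¹' (rhoF g '' wallH _ x) ∈ hypSys rhoE := by
  obtain ⟨ω, ρ, hpos, hneg⟩ := exists_liftWord_sign_change hrhoE hrhoF hmeet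
  obtain ⟨ω', c, t, hwall⟩ := exists_image_wallH_eq_of_sign_change hrhoF hpos hneg
  rw [hwall, emb_preimage_image_liftWord hrhoE hrhoF, emb_preimage_wallH]
  exact ⟨_, t, rfl⟩

end GeomSetting

/-- **Theorem 4.18.** The hyperplane system `A` is obtained from `Ǎ` by intersecting with
`Hom_R(RΛ_S, ℝ)` those hyperplanes of `Ǎ` that meet the Tits cone `T°`. -/
theorem hyperplane_system_identification (G : GeomSetting R ι S W)
    (rhoE : W →* ((S → ℝ) ≃ₗ[ℝ] (S → ℝ)))
    (hrhoE : ∀ (s : S) (Z : S → ℝ) (t : S),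
      rhoE (G.cs.simple s) Z t = Z t - G.FP (G.cartan s t) * Z s)
    (rhoF : G.Wcheck →* (((ι × S) → ℝ) ≃ₗ[ℝ] ((ι × S) → ℝ)))
    (hrhoF : ∀ (p : ι × S) (Z : (ι × S) → ℝ) (q : ι × S),
      rhoF (G.gen p) Z q = Z q - (G.rcheck p q : ℝ) * Z p) :
    hypSys rhoE
      = {H | ∃ Hc ∈ hypSys rhoF,
          (Hc ∩ (G.emb '' interior (titsT rhoE))).Nonempty ∧ H = G.emb ⁻¹' Hc} := by
  ext H
  constructor
  · exact G.exists_emb_preimage_eq_of_mem_hypSys hrhoE hrhoF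
  · rintro ⟨_, ⟨g, x, rfl⟩, hmeet, rfl⟩
    exact G.emb_preimage_mem_hypSys hrhoE hrhoF hmeet
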